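/- arXiv:2407.06368 — 2 statements merged into one kernel-verified Lean document; each statement's English description precedes it below -/
import Mathlib

section
/- Let (M, ∘, e) be an F-manifold, let v₁ = ℰ be an eventual identity, and let v₂ = ℰ ∘ α with α a weak eventual identity such that [v₁, v₂] = 0. Define v_i = ℰ ∘ α^{i−1}. Then [v_i, v_j] = (j − i) α^{i+j−3} ∘ [v₁, v₂] = 0 for all i, j ≥ 1; hence the vector fields v₁, …, v_n pairwise commute. -/
/-!
If `X` is a weak eventual identity, `[X, Y ∘ Z] = [X, Y] ∘ Z + Y ∘ [X, Z] + [e, X] ∘ Y ∘ Z`, so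
`m ↦ [X, Y ∘ αᵐ]` is "affine in `m`":
`[X, Y ∘ α^(m+1)] = (m + 1) αᵐ ∘ [X, Y ∘ α] - m α^(m+1) ∘ [X, Y]`.
By the Hertling–Manin condition weak eventual identities are closed under `∘`, so this applies in
both slots of `[β₀ ∘ αⁿ, β₁ ∘ αᵐ]`; together with a direct computation at `n = m = 1` it gives the
bracket formula. For `β₀ = β₁ = ℰ` the terms `[ℰ, ℰ]` and `[ℰ ∘ α, ℰ] + [ℰ, ℰ ∘ α]` vanish, leaving
`[ℰ ∘ αⁿ, ℰ ∘ αᵐ] = (m - n) α^(n+m-1) ∘ [ℰ, ℰ ∘ α]`.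
-/

abbrev commRingOfMul {V : Type*} [AddCommGroup V] (mul : V → V → V) (e : V)
    (hcomm : ∀ X Y, mul X Y = mul Y X) (hassoc : ∀ X Y Z, mul (mul X Y) Z = mul X (mul Y Z))
    (hunit : ∀ X, mul e X = X) (haddl : ∀ X Y Z, mul (X + Y) Z = mul X Z + mul Y Z) :
    CommRing V :=
  have zero_mul' : ∀ X, mul 0 X = 0 := fun X => by
    simpa using haddl 0 0 X
  { ‹AddCommGroup V› with
    mul := mul
    one := e
    one_mul := hunit
    mul_one := fun X => (hcomm X e).trans (hunit X)
    mul_assoc := hassoc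
    mul_comm := hcomm
    right_distrib := haddl
    left_distrib := fun X Y Z => by
      change mul X (Y + Z) = mul X Y + mul X Z
      rw [hcomm X, haddl, hcomm Y, hcomm Z]
    zero_mul := zero_mul'
    mul_zero := fun X => (hcomm X 0).trans (zero_mul' X) }

section FManifoldAlgebra

variable {R : Type*} [CommRing R] [Bracket R R]

/-- The Lie derivative `(L_Z ∘)(X, Y)` of the multiplication. -/
def lieDerivMul (Z X Y : R) : R :=
  ⁅Z, X * Y⁆ - ⁅Z, X⁆ * Y - X * ⁅Z, Y⁆

variable (R) in
class IsFManifoldAlgebra : Prop where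
  lie_self : ∀ X : R, ⁅X, X⁆ = 0
  lie_skew : ∀ X Y : R, -⁅Y, X⁆ = ⁅X, Y⁆
  lieDerivMul_mul : ∀ X Y Z W : R,
    lieDerivMul (X * Y) Z W = X * lieDerivMul Y Z W + Y * lieDerivMul X Z W

def IsWeakEventualIdentity (α : R) : Prop :=
  ∀ X Y, lieDerivMul α X Y = ⁅(1 : R), α⁆ * (X * Y)

theorem IsWeakEventualIdentity.lie_mul {α : R} (hα : IsWeakEventualIdentity α) (X Y : R) :
    ⁅α, X * Y⁆ = ⁅α, X⁆ * Y + X * ⁅α, Y⁆ + ⁅(1 : R), α⁆ * (X * Y) := by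
  have h := hα X Y
  rw [lieDerivMul] at h
  linear_combination h

theorem IsWeakEventualIdentity.lie_mul_pow_succ {X : R} (hX : IsWeakEventualIdentity X)
    (Y α : R) (m : ℕ) :
    ⁅X, Y * α ^ (m + 1)⁆ = (m + 1) * α ^ m * ⁅X, Y * α⁆ - m * α ^ (m + 1) * ⁅X, Y⁆ := by
  induction m with
  | zero => simp
  | succ m ih =>
    have hstep := hX.lie_mul (Y * α ^ (m + 1)) α
    have hfirst := hX.lie_mul Y α
    rw [pow_succ α (m + 1), ← mul_assoc]
    push_cast
    linear_combination hstep + α * ih - α ^ (m + 1) * hfirst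

variable [IsFManifoldAlgebra R]

theorem IsWeakEventualIdentity.mul_pow_succ_lie {X : R} (hX : IsWeakEventualIdentity X)
    (Y α : R) (n : ℕ) :
    ⁅Y * α ^ (n + 1), X⁆ = (n + 1) * α ^ n * ⁅Y * α, X⁆ - n * α ^ (n + 1) * ⁅Y, X⁆ := by
  have h := hX.lie_mul_pow_succ Y α n
  simp only [← IsFManifoldAlgebra.lie_skew X] at h
  linear_combination -h

theorem lieDerivMul_one (X Y : R) : lieDerivMul (1 : R) X Y = 0 := by
  have h := IsFManifoldAlgebra.lieDerivMul_mul (1 : R) 1 X Y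
  simp only [one_mul] at h
  linear_combination -h

theorem isWeakEventualIdentity_one : IsWeakEventualIdentity (1 : R) := fun X Y => by
  rw [lieDerivMul_one, IsFManifoldAlgebra.lie_self, zero_mul]

theorem lie_one_mul (X Y : R) : ⁅(1 : R), X * Y⁆ = ⁅(1 : R), X⁆ * Y + X * ⁅(1 : R), Y⁆ := by
  linear_combination isWeakEventualIdentity_one.lie_mul X Y +
    (X * Y) * IsFManifoldAlgebra.lie_self (1 : R)

theorem IsWeakEventualIdentity.mul {X Y : R} (hX : IsWeakEventualIdentity X)
    (hY : IsWeakEventualIdentity Y) : IsWeakEventualIdentity (X * Y) := fun Z W => by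
  rw [IsFManifoldAlgebra.lieDerivMul_mul, hX Z W, hY Z W]
  linear_combination -(Z * W) * lie_one_mul X Y

theorem IsWeakEventualIdentity.pow {α : R} (hα : IsWeakEventualIdentity α) (n : ℕ) :
    IsWeakEventualIdentity (α ^ n) := by
  induction n with
  | zero => exact pow_zero α ▸ isWeakEventualIdentity_one
  | succ n ih => exact pow_succ α n ▸ ih.mul hα

theorem IsWeakEventualIdentity.lie_mul_mul_mul {β₀ α : R} (h₀ : IsWeakEventualIdentity β₀)
    (hα : IsWeakEventualIdentity α) (β₁ : R) :
    ⁅β₀ * α, β₁ * α⁆ = α * ⁅β₀, β₁ * α⁆ + α * ⁅β₀ * α, β₁⁆ - α ^ 2 * ⁅β₀, β₁⁆ := by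
  have hleft := (h₀.mul hα).lie_mul β₁ α
  have hright := h₀.lie_mul β₁ α
  have hα_left := hα.lie_mul β₀ α
  linear_combination hleft - α * hright - β₁ * IsFManifoldAlgebra.lie_skew (β₀ * α) α
    - β₁ * hα_left + β₁ * α * IsFManifoldAlgebra.lie_skew β₀ α
    - β₁ * β₀ * IsFManifoldAlgebra.lie_self α + β₁ * α * lie_one_mul β₀ α

theorem IsWeakEventualIdentity.lie_mul_pow_mul_pow {β₀ β₁ α : R}
    (h₀ : IsWeakEventualIdentity β₀) (h₁ : IsWeakEventualIdentity β₁)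
    (hα : IsWeakEventualIdentity α) {n m k : ℕ} (hk : n + m = k + 1) :
    ⁅β₀ * α ^ n, β₁ * α ^ m⁆ =
      α ^ k * (m * ⁅β₀, β₁ * α⁆ + n * ⁅β₀ * α, β₁⁆) - k * α ^ (k + 1) * ⁅β₀, β₁⁆ := by
  rcases n with _ | n <;> rcases m with _ | m
  · omega
  · obtain rfl : m = k := by omega
    rw [pow_zero, mul_one]
    push_cast
    linear_combination h₀.lie_mul_pow_succ β₁ α m
  · obtain rfl : n = k := by omega
    rw [pow_zero, mul_one]
    push_cast
    linear_combination h₁.mul_pow_succ_lie β₀ α n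
  · obtain rfl : k = n + m + 1 := by omega
    have houter := (h₀.mul (hα.pow (n + 1))).lie_mul_pow_succ β₁ α m
    have hinner := (h₁.mul hα).mul_pow_succ_lie β₀ α n
    have hinner' := h₁.mul_pow_succ_lie β₀ α n
    have hcorner := h₀.lie_mul_mul_mul hα β₁
    push_cast
    linear_combination houter + (m + 1) * α ^ m * hinner - m * α ^ (m + 1) * hinner'
      + (m + 1) * (n + 1) * α ^ (m + n) * hcorner

theorem IsWeakEventualIdentity.lie_mul_pow_mul_pow_self {ℰ α : R}
    (hℰ : IsWeakEventualIdentity ℰ) (hα : IsWeakEventualIdentity α) {n m k : ℕ}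
    (hk : n + m = k + 1) :
    ⁅ℰ * α ^ n, ℰ * α ^ m⁆ = ((m : ℤ) - n) • (α ^ k * ⁅ℰ, ℰ * α⁆) := by
  rw [hℰ.lie_mul_pow_mul_pow hℰ hα hk, ← IsFManifoldAlgebra.lie_skew (ℰ * α) ℰ,
    IsFManifoldAlgebra.lie_self, zsmul_eq_mul]
  push_cast
  ring

end FManifoldAlgebra

theorem stmt11_general (V : Type*) [LieRing V]
    (mul : V → V → V) (e : V)
    (hcomm : ∀ X Y, mul X Y = mul Y X)
    (hassoc : ∀ X Y Z, mul (mul X Y) Z = mul X (mul Y Z))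
    (hunit : ∀ X, mul e X = X)
    (haddl : ∀ X Y Z, mul (X + Y) Z = mul X Z + mul Y Z)
    (LD : V → V → V → V)
    (hLD : ∀ Z X Y, LD Z X Y = ⁅Z, mul X Y⁆ - mul ⁅Z, X⁆ Y - mul X ⁅Z, Y⁆)
    (hHM : ∀ X Y Z W, LD (mul X Y) Z W = mul X (LD Y Z W) + mul Y (LD X Z W))
    (ℰ α : V)
    (hℰ : ∀ X Y, LD ℰ X Y = mul ⁅e, ℰ⁆ (mul X Y))
    (hα : ∀ X Y, LD α X Y = mul ⁅e, α⁆ (mul X Y))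
    (apow : ℕ → V) (hpow0 : apow 0 = e) (hpowS : ∀ k, apow (k + 1) = mul α (apow k))
    (v : ℕ → V) (hv : ∀ i, v i = mul ℰ (apow (i - 1)))
    (hcomm12 : ⁅v 1, v 2⁆ = 0) :
    (∀ i j : ℕ, 1 ≤ i → 1 ≤ j → 3 ≤ i + j →
      ⁅v i, v j⁆ = ((j : ℤ) - (i : ℤ)) • mul (apow (i + j - 3)) ⁅v 1, v 2⁆) ∧
    (∀ i j : ℕ, 1 ≤ i → 1 ≤ j → ⁅v i, v j⁆ = 0) := by
  let : CommRing V := commRingOfMul mul e hcomm hassoc hunit haddl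
  obtain rfl : LD = lieDerivMul := funext fun Z => funext fun X => funext (hLD Z X)
  have : IsFManifoldAlgebra V := ⟨lie_self, lie_skew, hHM⟩
  have hℰ' : IsWeakEventualIdentity ℰ := hℰ
  have hα' : IsWeakEventualIdentity α := hα
  have hapow : ∀ n, apow n = α ^ n := fun n => by
    induction n with
    | zero => exact hpow0
    | succ n ih => rw [hpowS, ih, pow_succ']; rfl
  have hv' : ∀ n, v (n + 1) = ℰ * α ^ n := fun n => by
    rw [hv, Nat.add_sub_cancel, hapow]; rfl
  have h12 : ⁅v 1, v 2⁆ = ⁅ℰ * α ^ 0, ℰ * α ^ 1⁆ := by rw [← hv', ← hv']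
  have hbracket : ∀ n m k, n + m = k + 1 →
      ⁅v (n + 1), v (m + 1)⁆ = ((m : ℤ) - n) • (α ^ k * ⁅v 1, v 2⁆) := fun n m k hk => by
    rw [hv', hv', hℰ'.lie_mul_pow_mul_pow_self hα' hk, h12, pow_zero, pow_one, mul_one]
  refine ⟨fun i j hi hj hij => ?_, fun i j hi hj => ?_⟩
  · obtain ⟨n, rfl⟩ := Nat.exists_eq_add_of_le' hi
    obtain ⟨m, rfl⟩ := Nat.exists_eq_add_of_le' hj
    rw [show n + 1 + (m + 1) - 3 = n + m - 1 by omega, hapow, hbracket n m (n + m - 1) (by omega)]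
    congr 1
    push_cast
    ring
  · obtain ⟨n, rfl⟩ := Nat.exists_eq_add_of_le' hi
    obtain ⟨m, rfl⟩ := Nat.exists_eq_add_of_le' hj
    rcases Nat.eq_zero_or_pos (n + m) with hzero | hpos
    · obtain ⟨rfl, rfl⟩ : n = 0 ∧ m = 0 := by omega
      exact lie_self _
    · rw [hbracket n m (n + m - 1) (by omega), hcomm12, mul_zero, smul_zero]

/-- Abstract formalization: on an F-manifold, let `v₁ = ℰ` be an eventual identity
(invertible weak eventual identity), `α` a weak eventual identity with
`v₂ = ℰ∘α` and `[v₁, v₂] = 0`, and `v_i = ℰ∘α^{i−1}`.  Then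
`[v_i, v_j] = (j−i) α^{i+j−3} ∘ [v₁,v₂] = 0`, so the `v_i` pairwise commute. -/
theorem stmt11 (V : Type*) [LieRing V]
    (mul : V → V → V) (e : V)
    (hcomm : ∀ X Y, mul X Y = mul Y X)
    (hassoc : ∀ X Y Z, mul (mul X Y) Z = mul X (mul Y Z))
    (hunit : ∀ X, mul e X = X)
    (haddl : ∀ X Y Z, mul (X + Y) Z = mul X Z + mul Y Z)
    (LD : V → V → V → V)
    (hLD : ∀ Z X Y, LD Z X Y = ⁅Z, mul X Y⁆ - mul ⁅Z, X⁆ Y - mul X ⁅Z, Y⁆)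
    (hHM : ∀ X Y Z W, LD (mul X Y) Z W = mul X (LD Y Z W) + mul Y (LD X Z W))
    (ℰ Einv α : V)
    (hinv : mul ℰ Einv = e)
    (hℰ : ∀ X Y, LD ℰ X Y = mul ⁅e, ℰ⁆ (mul X Y))
    (hα : ∀ X Y, LD α X Y = mul ⁅e, α⁆ (mul X Y))
    (apow : ℕ → V) (hpow0 : apow 0 = e) (hpowS : ∀ k, apow (k + 1) = mul α (apow k))
    (v : ℕ → V) (hv : ∀ i, v i = mul ℰ (apow (i - 1)))
    (hcomm12 : ⁅v 1, v 2⁆ = 0) :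
    (∀ i j : ℕ, 1 ≤ i → 1 ≤ j → 3 ≤ i + j →
      ⁅v i, v j⁆ = ((j : ℤ) - (i : ℤ)) • mul (apow (i + j - 3)) ⁅v 1, v 2⁆) ∧
    (∀ i j : ℕ, 1 ≤ i → 1 ≤ j → ⁅v i, v j⁆ = 0) :=
  stmt11_general V mul e hcomm hassoc hunit haddl LD hLD hHM ℰ α hℰ hα apow hpow0 hpowS v hv hcomm12
end

section
/- Let ℰ and 𝒢 be weak eventual identities on an F-manifold (M, ∘, e), i.e., L_ℰ(∘)(X,Y) = [e,ℰ]∘X∘Y and L_𝒢(∘)(X,Y) = [e,𝒢]∘X∘Y for all vector fields X, Y. Then the product ℰ ∘ 𝒢 is also a weak eventual identity: L_{ℰ∘𝒢}(∘)(X,Y) = [e, ℰ∘𝒢] ∘ X ∘ Y for all X, Y. -/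
/-!
Applying the Hertling–Manin condition to `e = e ∘ e` shows `L_e(∘) = 0`, i.e. `[e, ·]` is a
derivation of `∘`. The condition applied to `ℰ ∘ 𝒢` then gives
`L_{ℰ∘𝒢}(∘)(X,Y) = ℰ ∘ [e,𝒢] ∘ X ∘ Y + 𝒢 ∘ [e,ℰ] ∘ X ∘ Y = [e, ℰ ∘ 𝒢] ∘ X ∘ Y`.
-/

section

variable {V : Type*} {mul : V → V → V}

theorem mul_left_comm_of_comm_of_assoc (hcomm : ∀ X Y, mul X Y = mul Y X)
    (hassoc : ∀ X Y Z, mul (mul X Y) Z = mul X (mul Y Z)) (X Y Z : V) :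
    mul X (mul Y Z) = mul Y (mul X Z) := by
  rw [← hassoc, hcomm X Y, hassoc]

theorem hertlingManin_unit_eq_zero [AddGroup V] {e : V} (hunit : ∀ X, mul e X = X)
    {LD : V → V → V → V}
    (hHM : ∀ X Y Z W, LD (mul X Y) Z W = mul X (LD Y Z W) + mul Y (LD X Z W)) (Z W : V) :
    LD e Z W = 0 := by
  have h := hHM e e Z W
  rwa [hunit, hunit, left_eq_add] at h

theorem lie_unit_mul_of_hertlingManin [LieRing V] {e : V} (hunit : ∀ X, mul e X = X)
    {LD : V → V → V → V}
    (hLD : ∀ Z X Y, LD Z X Y = ⁅Z, mul X Y⁆ - mul ⁅Z, X⁆ Y - mul X ⁅Z, Y⁆)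
    (hHM : ∀ X Y Z W, LD (mul X Y) Z W = mul X (LD Y Z W) + mul Y (LD X Z W)) (X Y : V) :
    ⁅e, mul X Y⁆ = mul ⁅e, X⁆ Y + mul X ⁅e, Y⁆ := by
  have h := hLD e X Y
  rwa [hertlingManin_unit_eq_zero hunit hHM, eq_comm, sub_sub, sub_eq_zero] at h

end

/-- Abstract formalization on the Lie algebra of vector fields with the F-manifold
multiplication `∘` (Hertling–Manin condition): if `ℰ` and `𝒢` are weak eventual
identities then so is `ℰ∘𝒢`:
`L_{ℰ∘𝒢}(∘)(X,Y) = [e, ℰ∘𝒢] ∘ X ∘ Y` for all `X, Y`. -/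
theorem stmt19 (V : Type*) [LieRing V]
    (mul : V → V → V) (e : V)
    (hcomm : ∀ X Y, mul X Y = mul Y X)
    (hassoc : ∀ X Y Z, mul (mul X Y) Z = mul X (mul Y Z))
    (hunit : ∀ X, mul e X = X)
    (haddl : ∀ X Y Z, mul (X + Y) Z = mul X Z + mul Y Z)
    (LD : V → V → V → V)
    (hLD : ∀ Z X Y, LD Z X Y = ⁅Z, mul X Y⁆ - mul ⁅Z, X⁆ Y - mul X ⁅Z, Y⁆)
    (hHM : ∀ X Y Z W, LD (mul X Y) Z W = mul X (LD Y Z W) + mul Y (LD X Z W))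
    (ℰ 𝒢 : V)
    (hℰ : ∀ X Y, LD ℰ X Y = mul ⁅e, ℰ⁆ (mul X Y))
    (h𝒢 : ∀ X Y, LD 𝒢 X Y = mul ⁅e, 𝒢⁆ (mul X Y)) :
    ∀ X Y, LD (mul ℰ 𝒢) X Y = mul ⁅e, mul ℰ 𝒢⁆ (mul X Y) := by
  intro X Y
  rw [hHM, hℰ, h𝒢, lie_unit_mul_of_hertlingManin hunit hLD hHM, haddl, hassoc, hassoc,
    mul_left_comm_of_comm_of_assoc hcomm hassoc 𝒢, add_comm]
end
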